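/- arXiv:math/0107097 — 2 statements merged into one kernel-verified Lean document; each statement's English description precedes it below -/
import Mathlib

section
/- Let n ≥ 1, let k₁, …, k_n be nonnegative integers with K = k₁ + ⋯ + k_n, and let σ, τ ∈ S_n. Then T_{k_1,…,k_n}(σ ∘ τ) = T_{k_{τ^{-1}(1)},…,k_{τ^{-1}(n)}}(σ) ∘ T_{k_1,…,k_n}(τ) as elements of S_K. -/
open Finset

/-- Split a sigma type over a sum of index types into a sum of sigma types. -/
def sigmaSumSplit {α β : Type*} (γ : α ⊕ β → Type*) :
    (Σ p : α ⊕ β, γ p) ≃ (Σ a : α, γ (Sum.inl a)) ⊕ (Σ b : β, γ (Sum.inr b)) where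
  toFun p := match p with
    | ⟨Sum.inl a, x⟩ => Sum.inl ⟨a, x⟩
    | ⟨Sum.inr b, x⟩ => Sum.inr ⟨b, x⟩
  invFun q := match q with
    | Sum.inl ⟨a, x⟩ => ⟨Sum.inl a, x⟩
    | Sum.inr ⟨b, x⟩ => ⟨Sum.inr b, x⟩
  left_inv p := by rcases p with ⟨a | b, x⟩ <;> rfl
  right_inv q := by rcases q with ⟨a, x⟩ | ⟨b, x⟩ <;> rfl

/-- A sigma type over `Fin 1` is equivalent to its fiber over `0`. -/
def sigmaFinOneEquiv (β : Fin 1 → Type*) : (Σ i : Fin 1, β i) ≃ β 0 where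
  toFun p := cast (congrArg β (Subsingleton.elim p.1 0)) p.2
  invFun b := ⟨0, b⟩
  left_inv p := by
    rcases p with ⟨i, b⟩
    have : i = 0 := Subsingleton.elim i 0
    subst this
    rfl
  right_inv b := rfl

/-- The canonical (block-lexicographic) equivalence between `Σ i : Fin n, Fin (k i)`
and `Fin (k 0 + ⋯ + k (n-1))`: the sigma type is enumerated by listing the fibers
(blocks) in order. -/
def blockFinSigmaFinEquiv : {n : ℕ} → (k : Fin n → ℕ) → ((Σ i : Fin n, Fin (k i)) ≃ Fin (∑ i, k i))
  | 0, k =>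
    haveI : IsEmpty (Σ i : Fin 0, Fin (k i)) := ⟨fun p => p.1.elim0⟩
    (Equiv.equivOfIsEmpty _ (Fin 0)).trans (finCongr (by simp))
  | (n + 1), k =>
    ((Equiv.sigmaCongrLeft (finSumFinEquiv (m := n) (n := 1))).symm.trans
      ((sigmaSumSplit _).trans
        ((Equiv.sumCongr (blockFinSigmaFinEquiv fun i => k (finSumFinEquiv (Sum.inl i)))
            (sigmaFinOneEquiv fun b => Fin (k (finSumFinEquiv (Sum.inr b))))).trans
          (finSumFinEquiv.trans (finCongr (by
            rw [Fin.sum_univ_castSucc]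
            simp [finSumFinEquiv]
            rfl))))))

/-- The block permutation `T_{k₁,…,kₙ}(σ)` of the paper: it permutes the `n`
consecutive blocks of sizes `k₁, …, kₙ` of `{1, …, K}` (where `K = k₁ + ⋯ + kₙ`)
intact, placing block `i` where `σ` places the symbol `i`. -/
def blockPerm {n : ℕ} (k : Fin n → ℕ) (σ : Equiv.Perm (Fin n)) :
    Equiv.Perm (Fin (∑ i, k i)) :=
  ((blockFinSigmaFinEquiv k).symm.trans
    ((Equiv.sigmaCongr σ fun i => finCongr (show k i = k (σ.symm (σ i)) by rw [σ.symm_apply_apply])).trans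
      ((blockFinSigmaFinEquiv fun i => k (σ.symm i)).trans
        (finCongr (Equiv.sum_comp σ.symm k)))))

/-- Multiplicativity of block permutations:
`T_{k₁,…,kₙ}(σ ∘ τ) = T_{k_{τ⁻¹(1)},…,k_{τ⁻¹(n)}}(σ) ∘ T_{k₁,…,kₙ}(τ)` in `S_K`,
where the left factor is transported to `S_K` along the canonical identification
`∑ i, k (τ⁻¹ i) = ∑ i, k i`. -/
theorem blockPerm_mul {n : ℕ} (hn : 1 ≤ n) (k : Fin n → ℕ) (σ τ : Equiv.Perm (Fin n)) :
    blockPerm k (σ * τ) =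
      (finCongr (Equiv.sum_comp τ.symm k)).permCongr
          (blockPerm (fun i => k (τ.symm i)) σ) *
        blockPerm k τ := by
  have cast_self : ∀ (m : ℕ) (h : m = m) (x : Fin m), Fin.cast h x = x := by
    intro m h x; rfl
  ext x
  obtain ⟨⟨i, j⟩, rfl⟩ := (blockFinSigmaFinEquiv k).surjective x
  simp [blockPerm, Equiv.sigmaCongr, Equiv.permCongr, Equiv.Perm.mul_apply, cast_self,
    Fin.cast_cast]
  rfl
end

section
/- Let n ≥ 1, let k₁, …, k_n be nonnegative integers with K = k₁ + ⋯ + k_n, let σ ∈ S_n, and let m₁, …, m_K be nonnegative integers. For each 1 ≤ i ≤ n set M_i = m_{k₁+⋯+k_{i−1}+1} + ⋯ + m_{k₁+⋯+k_i} (the sum of the fine sizes within the i-th coarse block). Then T_{m_1,…,m_K}(T_{k_1,…,k_n}(σ)) = T_{M_1,…,M_n}(σ) as elements of S_{m₁+⋯+m_K}. -/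
open Finset

section
open Finset
variable {n : ℕ}

/-- Extension of a `Fin n`-indexed family to `ℕ` by zero. -/
def kext {n : ℕ} (k : Fin n → ℕ) : ℕ → ℕ := fun t => if h : t < n then k ⟨t, h⟩ else 0

theorem kext_pos {k : Fin n → ℕ} {t : ℕ} (h : t < n) : kext k t = k ⟨t, h⟩ := dif_pos h

theorem sum_kext (k : Fin n → ℕ) : ∑ t ∈ range n, kext k t = ∑ i, k i := by
  rw [← Fin.sum_univ_eq_sum_range]
  exact Finset.sum_congr rfl fun i _ => by simp [kext, i.isLt]

theorem fsfe_castSucc (k : Fin (n+1) → ℕ) (i : Fin n) (j : Fin (k (Fin.castAdd 1 i))) :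
    ((blockFinSigmaFinEquiv k ⟨Fin.castAdd 1 i, j⟩ : Fin _) : ℕ)
      = ((blockFinSigmaFinEquiv (fun l => k (Fin.castAdd 1 l)) ⟨i, j⟩ : Fin _) : ℕ) := by
  have h1 : (⟨Fin.castAdd 1 i, j⟩ : Σ b : Fin (n+1), Fin (k b)) =
      (Equiv.sigmaCongrLeft (finSumFinEquiv (m := n) (n := 1))) ⟨Sum.inl i, j⟩ := rfl
  simp only [blockFinSigmaFinEquiv, Equiv.trans_apply, h1, Equiv.symm_apply_apply]
  simp [sigmaSumSplit, finSumFinEquiv]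
  rfl

theorem fsfe_last (k : Fin (n+1) → ℕ) (j : Fin (k (Fin.natAdd n 0))) :
    ((blockFinSigmaFinEquiv k ⟨Fin.natAdd n 0, j⟩ : Fin _) : ℕ)
      = ∑ i : Fin n, k (Fin.castAdd 1 i) + j := by
  have h1 : (⟨Fin.natAdd n 0, j⟩ : Σ b : Fin (n+1), Fin (k b)) =
      (Equiv.sigmaCongrLeft (finSumFinEquiv (m := n) (n := 1))) ⟨Sum.inr 0, j⟩ := rfl
  simp only [blockFinSigmaFinEquiv, Equiv.trans_apply, h1, Equiv.symm_apply_apply]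
  simp [sigmaSumSplit, sigmaFinOneEquiv, finSumFinEquiv]
  rfl

theorem fsfe_val : ∀ {n : ℕ} (k : Fin n → ℕ) (i : Fin n) (j : Fin (k i)),
    ((blockFinSigmaFinEquiv k ⟨i, j⟩ : Fin _) : ℕ) = (∑ t ∈ range i.val, kext k t) + j.val
  | 0, k, i, j => i.elim0
  | (n+1), k, ⟨iv, hlt⟩, j => by
    rcases lt_or_ge iv n with h | h
    · have h1 : ((blockFinSigmaFinEquiv k ⟨⟨iv, hlt⟩, j⟩ : Fin _) : ℕ)
          = ((blockFinSigmaFinEquiv (fun l => k (Fin.castAdd 1 l)) ⟨⟨iv, h⟩, j⟩ : Fin _) : ℕ) :=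
        fsfe_castSucc k ⟨iv, h⟩ j
      rw [h1, fsfe_val (fun l => k (Fin.castAdd 1 l)) ⟨iv, h⟩ j]
      congr 1
      apply Finset.sum_congr rfl
      intro t ht
      have ht' : t < n := lt_of_lt_of_le (Finset.mem_range.mp ht) h.le
      rw [kext_pos ht', kext_pos (ht'.trans n.lt_succ_self)]
      rfl
    · have hn : iv = n := le_antisymm (Nat.lt_succ_iff.mp hlt) h
      subst hn
      have h1 : ((blockFinSigmaFinEquiv k ⟨⟨iv, hlt⟩, j⟩ : Fin _) : ℕ)
          = ∑ i : Fin iv, k (Fin.castAdd 1 i) + j.val := fsfe_last k j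
      rw [h1]
      congr 1
      rw [← Fin.sum_univ_eq_sum_range (kext k)]
      apply Finset.sum_congr rfl
      intro t _
      rw [kext_pos (t.isLt.trans iv.lt_succ_self)]
      rfl
end

section
open Finset
variable {n : ℕ}

theorem blockPerm_val (k : Fin n → ℕ) (σ : Equiv.Perm (Fin n)) (i : Fin n) (j : Fin (k i)) :
    ((blockPerm k σ (blockFinSigmaFinEquiv k ⟨i, j⟩) : Fin _) : ℕ)
      = (∑ t ∈ range (σ i).val, kext (fun l => k (σ.symm l)) t) + j.val := by
  simp only [blockPerm, Equiv.trans_apply, Equiv.symm_apply_apply]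
  have h1 : ((Equiv.sigmaCongr σ fun i => finCongr
        (show k i = k (σ.symm (σ i)) by rw [σ.symm_apply_apply])) ⟨i, j⟩
        : Σ l : Fin n, Fin (k (σ.symm l)))
      = ⟨σ i, ⟨j.val, by rw [σ.symm_apply_apply]; exact j.isLt⟩⟩ := by
    simp [Equiv.sigmaCongr, Equiv.sigmaCongrRight, Equiv.sigmaCongrLeft]
    exact Fin.ext rfl
  rw [h1]
  rw [finCongr_apply, Fin.coe_cast]
  exact fsfe_val (fun l => k (σ.symm l)) (σ i) _
end

section
open Finset
variable {n : ℕ} (k : Fin n → ℕ) (σ : Equiv.Perm (Fin n))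

theorem blockPerm_symm_val (r : Fin n) (b : ℕ) (hb : b < k r)
    (hlt : (∑ t ∈ range (σ r).val, kext (fun l => k (σ.symm l)) t) + b < ∑ i, k i) :
    (blockPerm k σ).symm ⟨(∑ t ∈ range (σ r).val, kext (fun l => k (σ.symm l)) t) + b, hlt⟩
      = blockFinSigmaFinEquiv k ⟨r, ⟨b, hb⟩⟩ := by
  apply (blockPerm k σ).injective
  rw [Equiv.apply_symm_apply]
  exact (Fin.ext (blockPerm_val k σ r ⟨b, hb⟩)).symm

variable (m : Fin (∑ i, k i) → ℕ) (M : Fin n → ℕ)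

theorem hM' (hM : ∀ i : Fin n, M i = ∑ j : Fin (k i), m (blockFinSigmaFinEquiv k ⟨i, j⟩))
    (r : Fin n) :
    M r = ∑ b ∈ range (k r), kext m ((∑ t ∈ range r.val, kext k t) + b) := by
  rw [hM r, ← Fin.sum_univ_eq_sum_range (fun b => kext m ((∑ t ∈ range r.val, kext k t) + b)) (k r)]
  apply Finset.sum_congr rfl
  intro b _
  have hv : ((blockFinSigmaFinEquiv k ⟨r, b⟩ : Fin _) : ℕ)
      = (∑ t ∈ range r.val, kext k t) + b.val := fsfe_val k r b
  rw [← hv, kext_pos (blockFinSigmaFinEquiv k ⟨r, b⟩).isLt]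

theorem groupC0 (hM : ∀ i : Fin n, M i = ∑ j : Fin (k i), m (blockFinSigmaFinEquiv k ⟨i, j⟩)) :
    ∀ s, s ≤ n →
      ∑ t ∈ range (∑ r ∈ range s, kext k r), kext m t = ∑ r ∈ range s, kext M r := by
  intro s
  induction s with
  | zero => simp
  | succ s ih =>
    intro hs
    have hsn : s < n := hs
    rw [Finset.sum_range_succ (kext k), Finset.sum_range_add, ih hsn.le,
      Finset.sum_range_succ (kext M), kext_pos hsn, kext_pos hsn,
      hM' k m M hM ⟨s, hsn⟩]

theorem sum_kext_perm :
    ∑ r ∈ range n, kext (fun l => k (σ.symm l)) r = ∑ i, k i := by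
  rw [sum_kext]; exact Equiv.sum_comp σ.symm k

theorem groupCsigma (hM : ∀ i : Fin n, M i = ∑ j : Fin (k i), m (blockFinSigmaFinEquiv k ⟨i, j⟩)) :
    ∀ s, s ≤ n →
      ∑ t ∈ range (∑ r ∈ range s, kext (fun l => k (σ.symm l)) r),
          kext (fun q => m ((blockPerm k σ).symm q)) t
        = ∑ r ∈ range s, kext (fun l => M (σ.symm l)) r := by
  intro s
  induction s with
  | zero => simp
  | succ s ih =>
    intro hs
    have hsn : s < n := hs
    rw [Finset.sum_range_succ (kext (fun l => k (σ.symm l))), Finset.sum_range_add, ih hsn.le,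
      Finset.sum_range_succ (kext (fun l => M (σ.symm l))), kext_pos hsn, kext_pos hsn]
    congr 1
    -- chunk
    set r : Fin n := σ.symm ⟨s, hsn⟩ with hr
    rw [hM' k m M hM r]
    apply Finset.sum_congr rfl
    intro b hb
    have hbk : b < k r := Finset.mem_range.mp hb
    -- bound for the fine index
    have hbound : (∑ t ∈ range s, kext (fun l => k (σ.symm l)) t) + b < ∑ i, k i := by
      rw [← sum_kext_perm k σ]
      calc (∑ t ∈ range s, kext (fun l => k (σ.symm l)) t) + b
          < (∑ t ∈ range s, kext (fun l => k (σ.symm l)) t) + kext (fun l => k (σ.symm l)) s := by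
            rw [kext_pos hsn]; exact Nat.add_lt_add_left hbk _
        _ = ∑ t ∈ range (s+1), kext (fun l => k (σ.symm l)) t :=
            (Finset.sum_range_succ _ _).symm
        _ ≤ ∑ t ∈ range n, kext (fun l => k (σ.symm l)) t :=
            Finset.sum_le_sum_of_subset (Finset.range_subset_range.mpr hs)
    have hsr : (σ r).val = s := by rw [hr, Equiv.apply_symm_apply]
    have hbound' : (∑ t ∈ range (σ r).val, kext (fun l => k (σ.symm l)) t) + b < ∑ i, k i := by
      rw [hsr]; exact hbound
    have hP := blockPerm_symm_val k σ r b hbk hbound'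
    have key : kext (fun q => m ((blockPerm k σ).symm q))
          ((∑ t ∈ range s, kext (fun l => k (σ.symm l)) t) + b)
        = m (blockFinSigmaFinEquiv k ⟨r, ⟨b, hbk⟩⟩) := by
      rw [kext_pos hbound]
      rw [← hP]
      congr 1
      exact Fin.ext (by simp [hsr])
    rw [key]
    have hv : ((blockFinSigmaFinEquiv k ⟨r, ⟨b, hbk⟩⟩ : Fin _) : ℕ)
        = (∑ t ∈ range r.val, kext k t) + b := fsfe_val k r ⟨b, hbk⟩
    rw [← hv, kext_pos (blockFinSigmaFinEquiv k ⟨r, ⟨b, hbk⟩⟩).isLt]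
end


/-- Refinement identity for block permutations: if the `K = k₁ + ⋯ + kₙ`
fine blocks of sizes `m₁, …, m_K` are grouped into `n` coarse blocks, the `i`-th coarse
block having total size `Mᵢ` (the sum of the fine sizes within it), then
`T_{m₁,…,m_K}(T_{k₁,…,kₙ}(σ)) = T_{M₁,…,Mₙ}(σ)` in `S_{m₁+⋯+m_K}`, the right-hand side
being transported along the canonical identification `∑ i, M i = ∑ x, m x`. -/
theorem blockPerm_blockPerm {n : ℕ} (hn : 1 ≤ n) (k : Fin n → ℕ)
    (σ : Equiv.Perm (Fin n)) (m : Fin (∑ i, k i) → ℕ) (M : Fin n → ℕ)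
    (hM : ∀ i : Fin n, M i = ∑ j : Fin (k i), m (blockFinSigmaFinEquiv k ⟨i, j⟩))
    (hsum : ∑ i, M i = ∑ x, m x) :
    blockPerm m (blockPerm k σ) = (finCongr hsum).permCongr (blockPerm M σ) := by
  apply Equiv.ext; intro x
  obtain ⟨⟨p, j⟩, rfl⟩ := (blockFinSigmaFinEquiv m).surjective x
  obtain ⟨⟨i, a⟩, rfl⟩ := (blockFinSigmaFinEquiv k).surjective p
  apply Fin.ext
  -- value of the coarse block permutation on the block index
  have hTp : ((blockPerm k σ (blockFinSigmaFinEquiv k ⟨i, a⟩) : Fin _) : ℕ)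
      = (∑ t ∈ Finset.range ((σ i : Fin n) : ℕ), kext (fun l => k (σ.symm l)) t) + (a : ℕ) :=
    blockPerm_val k σ i a
  -- LHS value
  have hL1 : ((blockPerm m (blockPerm k σ)
        (blockFinSigmaFinEquiv m ⟨blockFinSigmaFinEquiv k ⟨i, a⟩, j⟩) : Fin _) : ℕ)
      = (∑ t ∈ Finset.range ((blockPerm k σ (blockFinSigmaFinEquiv k ⟨i, a⟩) : Fin _) : ℕ),
          kext (fun q => m ((blockPerm k σ).symm q)) t) + (j : ℕ) :=
    blockPerm_val m (blockPerm k σ) _ j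
  rw [hTp, Finset.sum_range_add] at hL1
  have hC : ∑ t ∈ Finset.range
        (∑ r ∈ Finset.range ((σ i : Fin n) : ℕ), kext (fun l => k (σ.symm l)) r),
        kext (fun q => m ((blockPerm k σ).symm q)) t
      = ∑ t ∈ Finset.range ((σ i : Fin n) : ℕ), kext (fun l => M (σ.symm l)) t :=
    groupCsigma k σ m M hM ((σ i : Fin n) : ℕ) (σ i).isLt.le
  have hpt : ∀ b ∈ Finset.range (a : ℕ),
      kext (fun q => m ((blockPerm k σ).symm q))
        ((∑ t ∈ Finset.range ((σ i : Fin n) : ℕ), kext (fun l => k (σ.symm l)) t) + b)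
      = kext m ((∑ t ∈ Finset.range (i : ℕ), kext k t) + b) := by
    intro b hb
    have hba : b < (a : ℕ) := Finset.mem_range.mp hb
    have hbk : b < k i := hba.trans a.isLt
    have hbound : (∑ t ∈ Finset.range ((σ i : Fin n) : ℕ), kext (fun l => k (σ.symm l)) t) + b
        < ∑ i, k i := by
      have h2 := (blockPerm k σ (blockFinSigmaFinEquiv k ⟨i, a⟩)).isLt
      rw [hTp] at h2
      omega
    rw [kext_pos hbound, blockPerm_symm_val k σ i b hbk hbound]
    have hv : ((blockFinSigmaFinEquiv k ⟨i, ⟨b, hbk⟩⟩ : Fin _) : ℕ)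
        = (∑ t ∈ Finset.range (i : ℕ), kext k t) + b := fsfe_val k i ⟨b, hbk⟩
    rw [← hv, kext_pos (blockFinSigmaFinEquiv k ⟨i, ⟨b, hbk⟩⟩).isLt]
  rw [Finset.sum_congr rfl hpt, hC] at hL1
  -- the fine residue within the coarse block
  have hji : (j : ℕ) < kext m ((∑ t ∈ Finset.range (i : ℕ), kext k t) + (a : ℕ)) := by
    have hv : ((blockFinSigmaFinEquiv k ⟨i, a⟩ : Fin _) : ℕ)
        = (∑ t ∈ Finset.range (i : ℕ), kext k t) + (a : ℕ) := fsfe_val k i a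
    rw [← hv, kext_pos (blockFinSigmaFinEquiv k ⟨i, a⟩).isLt]
    exact j.isLt
  have hrlt : (∑ b ∈ Finset.range (a : ℕ), kext m ((∑ t ∈ Finset.range (i : ℕ), kext k t) + b))
      + (j : ℕ) < M i := by
    have h1 : (∑ b ∈ Finset.range (a : ℕ), kext m ((∑ t ∈ Finset.range (i : ℕ), kext k t) + b))
        + (j : ℕ)
        < ∑ b ∈ Finset.range ((a : ℕ) + 1), kext m ((∑ t ∈ Finset.range (i : ℕ), kext k t) + b) := by
      rw [Finset.sum_range_succ]
      omega
    have h2 : (∑ b ∈ Finset.range ((a : ℕ) + 1),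
          kext m ((∑ t ∈ Finset.range (i : ℕ), kext k t) + b))
        ≤ ∑ b ∈ Finset.range (k i), kext m ((∑ t ∈ Finset.range (i : ℕ), kext k t) + b) :=
      Finset.sum_le_sum_of_subset (Finset.range_subset_range.mpr a.isLt)
    rw [hM' k m M hM i]
    omega
  set r0 : Fin (M i) :=
    ⟨(∑ b ∈ Finset.range (a : ℕ), kext m ((∑ t ∈ Finset.range (i : ℕ), kext k t) + b)) + (j : ℕ),
      hrlt⟩ with hr0
  -- identify the transported point with a block point for M
  have hy : (finCongr hsum).symm (blockFinSigmaFinEquiv m ⟨blockFinSigmaFinEquiv k ⟨i, a⟩, j⟩)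
      = blockFinSigmaFinEquiv M ⟨i, r0⟩ := by
    apply Fin.ext
    rw [finCongr_symm, finCongr_apply, Fin.coe_cast]
    rw [fsfe_val m _ j, fsfe_val M i r0]
    have hpv : ((blockFinSigmaFinEquiv k ⟨i, a⟩ : Fin _) : ℕ)
        = (∑ t ∈ Finset.range (i : ℕ), kext k t) + (a : ℕ) := fsfe_val k i a
    rw [hpv, Finset.sum_range_add, groupC0 k m M hM (i : ℕ) i.isLt.le]
    simp [hr0]
    omega
  -- RHS value
  have hR : (((finCongr hsum).permCongr (blockPerm M σ)
        (blockFinSigmaFinEquiv m ⟨blockFinSigmaFinEquiv k ⟨i, a⟩, j⟩) : Fin _) : ℕ)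
      = (∑ t ∈ Finset.range ((σ i : Fin n) : ℕ), kext (fun l => M (σ.symm l)) t) + (r0 : ℕ) := by
    rw [Equiv.permCongr_apply, hy, finCongr_apply, Fin.coe_cast]
    exact blockPerm_val M σ i r0
  rw [hL1, hR]
  simp only [hr0, Fin.val_mk]
  omega
end
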